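/- Let G = (V,E) be a connected locally finite graph. For every x ∈ V, all integers n ≥ 2 and 0 ≤ m ≤ n, and every real μ > 0, P_x( G_n(X_0,X_m) / P^m(X_0,X_m) ≥ e^{μ} ) ≤ (n+1)·e^{−μ}, where the probability is over the lazy random walk started at x (note P^m(X_0,X_m) > 0 almost surely since the walk is lazy). Equivalently, P_x( −log P^m(X_0,X_m) ≥ −log G_n(X_0,X_m) + μ ) ≤ (n+1)·e^{−μ}. -/

import Mathlib

open scoped Classical BigOperators

namespace LazyRW

variable {V : Type*}

/-- One-step transition kernel of the lazy simple random walk. -/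
noncomputable def step (G : SimpleGraph V) [G.LocallyFinite] (x y : V) : ℝ :=
  if x = y then 1/2 else if G.Adj x y then 1 / (2 * (G.degree x)) else 0

/-- Probability of a given path of length `n` for the lazy walk started at `x`. -/
noncomputable def pathProb (G : SimpleGraph V) [G.LocallyFinite]
    (n : ℕ) (x : V) (p : Fin (n+1) → V) : ℝ :=
  (if p 0 = x then 1 else 0) * ∏ i : Fin n, step G (p i.castSucc) (p i.succ)

/-- Probability of an event determined by the first `n` steps of the lazy walk started at `x`. -/
noncomputable def walkProb (G : SimpleGraph V) [G.LocallyFinite]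
    (n : ℕ) (x : V) (E : Set (Fin (n+1) → V)) : ℝ :=
  ∑' p : (Fin (n+1) → V), pathProb G n x p * E.indicator (fun _ => (1:ℝ)) p

/-- Expectation of a functional of the first `n` steps of the lazy walk started at `x`. -/
noncomputable def walkExp (G : SimpleGraph V) [G.LocallyFinite]
    (n : ℕ) (x : V) (f : (Fin (n+1) → V) → ℝ) : ℝ :=
  ∑' p : (Fin (n+1) → V), pathProb G n x p * f p

/-- `n`-th power of the lazy transition matrix. -/
noncomputable def Pmat (G : SimpleGraph V) [G.LocallyFinite] : ℕ → V → V → ℝ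
  | 0, x, y => if x = y then 1 else 0
  | (n+1), x, y => ∑' z, Pmat G n x z * step G z y

/-- Total variation profile `TV_n`. -/
noncomputable def TV (G : SimpleGraph V) [G.LocallyFinite] (n : ℕ) : ℝ :=
  ⨆ e : {p : V × V // G.Adj p.1 p.2},
    (1/2) * ∑' z, |Pmat G n e.val.1 z - Pmat G n e.val.2 z|

/-- Expected graph-distance displacement at time `m`. -/
noncomputable def expDist (G : SimpleGraph V) [G.LocallyFinite] (m : ℕ) (x : V) : ℝ :=
  walkExp G m x (fun p => (G.dist (p 0) (p (Fin.last m)) : ℝ))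

/-- `D_n^*`: supremal expected displacement up to time `n`. -/
noncomputable def Dstar (G : SimpleGraph V) [G.LocallyFinite] (n : ℕ) : ℝ :=
  ⨆ x : V, ⨆ m : Fin (n+1), expDist G m.1 x

/-- Entropy of the walk at time `m` started at `x`. -/
noncomputable def entropy (G : SimpleGraph V) [G.LocallyFinite] (m : ℕ) (x : V) : ℝ :=
  ∑' y : V, Real.negMulLog (Pmat G m x y)

/-- `H_n^*`: supremal entropy up to time `n`. -/
noncomputable def Hstar (G : SimpleGraph V) [G.LocallyFinite] (n : ℕ) : ℝ :=
  ⨆ x : V, ⨆ m : Fin (n+1), entropy G m.1 x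

/-- `|∂W|`: the number of edges with exactly one endpoint in `W`. -/
noncomputable def boundaryCard (G : SimpleGraph V) [G.LocallyFinite] (W : Finset V) : ℕ :=
  ∑ w ∈ W, ((G.neighborFinset w).filter (fun z => z ∉ W)).card

/-- `deg(W)`: the sum of degrees of vertices in `W`. -/
noncomputable def degSum (G : SimpleGraph V) [G.LocallyFinite] (W : Finset V) : ℕ :=
  ∑ w ∈ W, G.degree w

/-- The isoperimetric profile `Φ(n)`. -/
noncomputable def isoProfile (G : SimpleGraph V) [G.LocallyFinite] (n : ℕ) : ℝ :=
  ⨅ W : {W : Finset V // W.Nonempty ∧ degSum G W ≤ n},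
    (boundaryCard G W.1 : ℝ) / (degSum G W.1 : ℝ)

/-- `q_m(u,v)`: probability that the lazy walk started at `u` first visits `v` at time `m`. -/
noncomputable def firstHit (G : SimpleGraph V) [G.LocallyFinite] (m : ℕ) (u v : V) : ℝ :=
  walkProb G m u {p | p (Fin.last m) = v ∧ ∀ i : Fin (m+1), i ≠ Fin.last m → p i ≠ v}

/-- The massive Green function `G_t(u,v)`. -/
noncomputable def greenT (G : SimpleGraph V) [G.LocallyFinite] (t : ℝ) (u v : V) : ℝ :=
  ∑' m : ℕ, (t/(t+1))^m * firstHit G m u v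

/-! Under `P_x` the endpoint `X_m` has law `P^m(x, ·)`, so Markov's inequality for the weight
`e^{-μ} G_n(x, y) / P^m(x, y)` of the endpoint bounds the probability by `e^{-μ} ∑_y G_n(x, y)`.
Since `q_k(x, ·) ≤ P^k(x, ·)` is a sub-probability vector, `∑_y G_t(x, y) ≤ ∑_k (t/(t+1))^k = t + 1`.
The sums over paths and vertices are `tsum`s, which are `0` when not summable, so the estimates are
proved on finite partial sums. -/

lemma sum_mul_comp_le_of_sum_fiber_le {α β : Type*} (S : Finset α) (e : α → β) (f : α → ℝ)
    (P g : β → ℝ) (hg : ∀ b, 0 ≤ g b) (hf : ∀ b, ∑ a ∈ S with e a = b, f a ≤ P b) :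
    ∑ a ∈ S, f a * g (e a) ≤ ∑ b ∈ S.image e, P b * g b := by
  rw [← Finset.sum_fiberwise_of_maps_to fun a ha => Finset.mem_image_of_mem e ha]
  refine Finset.sum_le_sum fun b _ => ?_
  calc ∑ a ∈ S with e a = b, f a * g (e a) = (∑ a ∈ S with e a = b, f a) * g b := by
        rw [Finset.sum_mul]
        exact Finset.sum_congr rfl fun a ha => by rw [(Finset.mem_filter.1 ha).2]
    _ ≤ P b * g b := mul_le_mul_of_nonneg_right (hf b) (hg b)

section LazyWalk

variable (G : SimpleGraph V) [G.LocallyFinite]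

lemma step_nonneg (x y : V) : 0 ≤ step G x y := by
  unfold step; split_ifs <;> positivity

lemma eq_or_adj_of_step_ne_zero {z y : V} (h : step G z y ≠ 0) : z = y ∨ G.Adj z y := by
  unfold step at h
  split_ifs at h with h₁ h₂
  exacts [Or.inl h₁, Or.inr h₂, absurd rfl h]

lemma sum_step_le_one (z : V) (Y : Finset V) : ∑ y ∈ Y, step G z y ≤ 1 := by
  set N := insert z (G.neighborFinset z)
  have hzero : ∀ y ∈ Y, y ∉ Y ∩ N → step G z y = 0 := fun y hy hyN => by
    by_contra h
    rcases eq_or_adj_of_step_ne_zero G h with rfl | hadj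
    · simp [N, hy] at hyN
    · simp [N, hy, hadj] at hyN
  have hnbr : ∀ y ∈ G.neighborFinset z, step G z y = 1 / (2 * G.degree z) := fun y hy => by
    have hadj := (G.mem_neighborFinset z y).1 hy
    simp [step, hadj.ne, hadj]
  calc ∑ y ∈ Y, step G z y = ∑ y ∈ Y ∩ N, step G z y :=
        (Finset.sum_subset Finset.inter_subset_left hzero).symm
    _ ≤ ∑ y ∈ N, step G z y := Finset.sum_le_sum_of_subset_of_nonneg Finset.inter_subset_right
        fun y _ _ => step_nonneg G z y
    _ = 1 / 2 + G.degree z * (1 / (2 * G.degree z)) := by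
        rw [Finset.sum_insert (by simp), Finset.sum_congr rfl hnbr, Finset.sum_const,
          G.card_neighborFinset_eq_degree, nsmul_eq_mul]
        simp [step]
    _ ≤ 1 := by
        rcases (G.degree z).eq_zero_or_pos with h | h
        · simp [h]; norm_num
        · have : (G.degree z : ℝ) ≠ 0 := by positivity
          field_simp; norm_num

lemma Pmat_succ (m : ℕ) (x y : V) : Pmat G (m + 1) x y = ∑' z, Pmat G m x z * step G z y := rfl

lemma summable_Pmat_mul_step (m : ℕ) (x y : V) :
    Summable fun z => Pmat G m x z * step G z y := by
  refine summable_of_ne_finset_zero (s := insert y (G.neighborFinset y)) fun z hz => ?_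
  suffices step G z y = 0 by rw [this, mul_zero]
  by_contra h
  rcases eq_or_adj_of_step_ne_zero G h with rfl | hadj
  · simp at hz
  · simp [hadj.symm] at hz

lemma Pmat_nonneg (m : ℕ) (x y : V) : 0 ≤ Pmat G m x y := by
  induction m generalizing y with
  | zero => unfold Pmat; positivity
  | succ m ih => exact tsum_nonneg fun z => mul_nonneg (ih z) (step_nonneg G z y)

lemma sum_Pmat_le_one (m : ℕ) (x : V) (Y : Finset V) : ∑ y ∈ Y, Pmat G m x y ≤ 1 := by
  induction m generalizing Y with
  | zero =>
    simp only [Pmat, Finset.sum_ite_eq]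
    split_ifs <;> norm_num
  | succ m ih =>
    simp only [Pmat_succ]
    rw [← Summable.tsum_finsetSum fun y _ => summable_Pmat_mul_step G m x y]
    refine tsum_le_of_sum_le' zero_le_one fun Z => ?_
    calc ∑ z ∈ Z, ∑ y ∈ Y, Pmat G m x z * step G z y
        = ∑ z ∈ Z, Pmat G m x z * ∑ y ∈ Y, step G z y := by simp only [Finset.mul_sum]
      _ ≤ ∑ z ∈ Z, Pmat G m x z := Finset.sum_le_sum fun z _ =>
          mul_le_of_le_one_right (Pmat_nonneg G m x z) (sum_step_le_one G z Y)
      _ ≤ 1 := ih Z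

lemma Pmat_le_one (m : ℕ) (x y : V) : Pmat G m x y ≤ 1 := by
  simpa using sum_Pmat_le_one G m x {y}

lemma pathProb_nonneg (m : ℕ) (x : V) (p : Fin (m + 1) → V) : 0 ≤ pathProb G m x p :=
  mul_nonneg (by positivity) (Finset.prod_nonneg fun i _ => step_nonneg G _ _)

lemma pathProb_succ (m : ℕ) (x : V) (p : Fin (m + 2) → V) :
    pathProb G (m + 1) x p
      = pathProb G m x (Fin.init p) * step G (Fin.init p (Fin.last m)) (p (Fin.last (m + 1))) := by
  simp only [pathProb, Fin.prod_univ_castSucc, Fin.init, Fin.succ_last, ← Fin.succ_castSucc,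
    Fin.castSucc_zero]
  exact (mul_assoc _ _ _).symm

lemma sum_pathProb_le_Pmat (m : ℕ) (x y : V) (S : Finset (Fin (m + 1) → V))
    (hS : ∀ p ∈ S, p (Fin.last m) = y) : ∑ p ∈ S, pathProb G m x p ≤ Pmat G m x y := by
  induction m generalizing y with
  | zero =>
    have hsub : S ⊆ {fun _ => y} := fun p hp => by
      rw [Finset.mem_singleton]
      funext i
      rw [Subsingleton.elim (α := Fin 1) i (Fin.last 0), hS p hp]
    refine (Finset.sum_le_sum_of_subset_of_nonneg hsub
      fun p _ _ => pathProb_nonneg G 0 x p).trans ?_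
    rw [Finset.sum_singleton]
    simp [pathProb, Pmat, eq_comm]
  | succ m ih =>
    have hinj : Set.InjOn Fin.init (S : Set (Fin (m + 2) → V)) := fun p hp q hq h => by
      funext i
      rcases Fin.eq_castSucc_or_eq_last i with ⟨j, rfl⟩ | rfl
      · exact congrFun h j
      · rw [hS p hp, hS q hq]
    calc ∑ p ∈ S, pathProb G (m + 1) x p
        = ∑ p ∈ S, pathProb G m x (Fin.init p) * step G (Fin.init p (Fin.last m)) y :=
          Finset.sum_congr rfl fun p hp => by rw [pathProb_succ, hS p hp]
      _ = ∑ q ∈ S.image Fin.init, pathProb G m x q * step G (q (Fin.last m)) y :=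
          (Finset.sum_image (f := fun q => pathProb G m x q * step G (q (Fin.last m)) y) hinj).symm
      _ ≤ ∑ z ∈ (S.image Fin.init).image (· (Fin.last m)), Pmat G m x z * step G z y :=
          sum_mul_comp_le_of_sum_fiber_le _ _ _ _ _ (step_nonneg G · y)
            fun z => ih z _ fun q hq => (Finset.mem_filter.1 hq).2
      _ ≤ Pmat G (m + 1) x y := (summable_Pmat_mul_step G m x y).sum_le_tsum _
          fun z _ => mul_nonneg (Pmat_nonneg G m x z) (step_nonneg G z y)

lemma walkProb_nonneg (m : ℕ) (x : V) (E : Set (Fin (m + 1) → V)) : 0 ≤ walkProb G m x E :=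
  tsum_nonneg fun p => mul_nonneg (pathProb_nonneg G m x p) (Set.indicator_nonneg (by simp) p)

/-- Markov's inequality for a weight `g` of the endpoint of the walk. -/
lemma walkProb_le_of_one_le_endpoint (m : ℕ) (x : V) (E : Set (Fin (m + 1) → V)) (g : V → ℝ)
    (hg : ∀ y, 0 ≤ g y) (hE : ∀ p ∈ E, p 0 = x → 1 ≤ g (p (Fin.last m))) (C : ℝ)
    (hC : ∀ Y : Finset V, ∑ y ∈ Y, Pmat G m x y * g y ≤ C) : walkProb G m x E ≤ C := by
  refine tsum_le_of_sum_le' (by simpa using hC ∅) fun S => ?_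
  have hpoint : ∀ p, pathProb G m x p * E.indicator (fun _ => 1) p
      ≤ pathProb G m x p * g (p (Fin.last m)) := fun p => by
    by_cases hp : p 0 = x
    · exact mul_le_mul_of_nonneg_left
        (Set.indicator_apply_le' (hE p · hp) fun _ => hg _) (pathProb_nonneg G m x p)
    · simp [pathProb, hp]
  calc ∑ p ∈ S, pathProb G m x p * E.indicator (fun _ => 1) p
      ≤ ∑ p ∈ S, pathProb G m x p * g (p (Fin.last m)) := Finset.sum_le_sum fun p _ => hpoint p
    _ ≤ ∑ y ∈ S.image (· (Fin.last m)), Pmat G m x y * g y :=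
        sum_mul_comp_le_of_sum_fiber_le _ _ _ _ _ hg
          fun y => sum_pathProb_le_Pmat G m x y _ fun p hp => (Finset.mem_filter.1 hp).2
    _ ≤ C := hC _

lemma firstHit_nonneg (m : ℕ) (x y : V) : 0 ≤ firstHit G m x y := walkProb_nonneg G m x _

lemma firstHit_le_Pmat (m : ℕ) (x y : V) : firstHit G m x y ≤ Pmat G m x y := by
  refine walkProb_le_of_one_le_endpoint G m x _ (fun z => if z = y then 1 else 0)
    (fun z => by positivity) (fun p hp _ => by simp [hp.1]) _ fun Y => ?_
  simp only [mul_ite, mul_one, mul_zero, Finset.sum_ite_eq']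
  split_ifs
  exacts [le_rfl, Pmat_nonneg G m x y]

lemma summable_pow_mul_firstHit {r : ℝ} (hr₀ : 0 ≤ r) (hr₁ : r < 1) (x y : V) :
    Summable fun k => r ^ k * firstHit G k x y :=
  (summable_geometric_of_lt_one hr₀ hr₁).of_nonneg_of_le
    (fun k => mul_nonneg (pow_nonneg hr₀ k) (firstHit_nonneg G k x y))
    fun k => mul_le_of_le_one_right (pow_nonneg hr₀ k)
      ((firstHit_le_Pmat G k x y).trans (Pmat_le_one G k x y))

lemma greenT_nonneg {t : ℝ} (ht : 0 ≤ t) (x y : V) : 0 ≤ greenT G t x y :=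
  tsum_nonneg fun k => mul_nonneg (by positivity) (firstHit_nonneg G k x y)

lemma sum_greenT_le {t : ℝ} (ht : 0 ≤ t) (x : V) (Y : Finset V) :
    ∑ y ∈ Y, greenT G t x y ≤ t + 1 := by
  set r := t / (t + 1)
  have hr₀ : 0 ≤ r := by positivity
  have hr₁ : r < 1 := (div_lt_one (by positivity)).2 (by linarith)
  have hfin : ∀ k, ∑ y ∈ Y, r ^ k * firstHit G k x y ≤ r ^ k := fun k => by
    rw [← Finset.mul_sum]
    exact mul_le_of_le_one_right (pow_nonneg hr₀ k) <|
      (Finset.sum_le_sum fun y _ => firstHit_le_Pmat G k x y).trans (sum_Pmat_le_one G k x Y)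
  calc ∑ y ∈ Y, greenT G t x y = ∑' k, ∑ y ∈ Y, r ^ k * firstHit G k x y :=
        (Summable.tsum_finsetSum fun y _ => summable_pow_mul_firstHit G hr₀ hr₁ x y).symm
    _ ≤ ∑' k : ℕ, r ^ k := Summable.tsum_le_tsum hfin
        (summable_sum fun y _ => summable_pow_mul_firstHit G hr₀ hr₁ x y)
        (summable_geometric_of_lt_one hr₀ hr₁)
    _ = t + 1 := by
        have h1r : 1 - r = (t + 1)⁻¹ := by simp only [r]; field_simp; ring
        rw [tsum_geometric_of_lt_one hr₀ hr₁, h1r, inv_inv]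

end LazyWalk

theorem statement13_general (V : Type) (G : SimpleGraph V) [G.LocallyFinite]
    (x : V) (n m : ℕ)
    (mu : ℝ) :
    walkProb G m x
        {p | Real.exp mu
              ≤ greenT G (n : ℝ) (p 0) (p (Fin.last m)) / Pmat G m (p 0) (p (Fin.last m))}
      ≤ ((n : ℝ) + 1) * Real.exp (-mu) := by
  have hn : (0 : ℝ) ≤ n := n.cast_nonneg
  refine walkProb_le_of_one_le_endpoint G m x _
    (fun y => Real.exp (-mu) * (greenT G n x y / Pmat G m x y))
    (fun y => mul_nonneg (Real.exp_nonneg _)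
      (div_nonneg (greenT_nonneg G hn x y) (Pmat_nonneg G m x y))) ?_ _ fun Y => ?_
  · rintro p hp rfl
    calc (1 : ℝ) = Real.exp (-mu) * Real.exp mu := by rw [← Real.exp_add, neg_add_cancel, Real.exp_zero]
      _ ≤ _ := mul_le_mul_of_nonneg_left hp (Real.exp_nonneg _)
  · have hpoint : ∀ y, Pmat G m x y * (Real.exp (-mu) * (greenT G n x y / Pmat G m x y))
        ≤ Real.exp (-mu) * greenT G n x y := fun y => by
      rcases (Pmat_nonneg G m x y).eq_or_lt with hP | hP
      · rw [← hP, zero_mul]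
        exact mul_nonneg (Real.exp_nonneg _) (greenT_nonneg G hn x y)
      · rw [mul_left_comm, mul_div_cancel₀ _ hP.ne']
    calc ∑ y ∈ Y, Pmat G m x y * (Real.exp (-mu) * (greenT G n x y / Pmat G m x y))
        ≤ Real.exp (-mu) * ∑ y ∈ Y, greenT G n x y := by
          rw [Finset.mul_sum]; exact Finset.sum_le_sum fun y _ => hpoint y
      _ ≤ ((n : ℝ) + 1) * Real.exp (-mu) := by
          rw [mul_comm]; exact mul_le_mul_of_nonneg_right (sum_greenT_le G hn x Y) (Real.exp_nonneg _)

/-- tail bound for the ratio of the massive Green function (with parameter `n`)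
to the transition probability. -/
theorem statement13 (V : Type) (G : SimpleGraph V) [G.LocallyFinite]
    (hconn : G.Connected) (x : V) (n m : ℕ) (hn : 2 ≤ n) (hm : m ≤ n)
    (mu : ℝ) (hmu : 0 < mu) :
    walkProb G m x
        {p | Real.exp mu
              ≤ greenT G (n : ℝ) (p 0) (p (Fin.last m)) / Pmat G m (p 0) (p (Fin.last m))}
      ≤ ((n : ℝ) + 1) * Real.exp (-mu) :=
  statement13_general V G x n m mu

end LazyRW
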